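/- Isotropy of the cross-section element: let f = ε + κ + Z where ε = ∑ e_{i,i+1}, κ is a diagonal matrix with κ_{r} = κ_{n-r+1} for all r, and Z = ∑_{r=1}^{⌊n/2⌋} e_{n-r+1,r}. Then for any positive diagonal matrix a with a_r = a_{n-r+1} for all r (i.e., a ∈ A_◇), one has π_{ε+𝔟_-}(a^{-1} f a) = f, where π projects onto ε plus the lower triangular part; i.e., A_◇ is contained in the coadjoint isotropy of f. -/

import Mathlib

open Matrix

/-- The principal nilpotent `ε = ∑ e_{i,i+1}`. -/
def epsMat (n : ℕ) : Matrix (Fin n) (Fin n) ℝ :=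
  Matrix.of fun i j => if (j : ℕ) = (i : ℕ) + 1 then 1 else 0

/-- The anti-diagonal element `Z = ∑_{r=1}^{⌊n/2⌋} e_{n-r+1,r}`: in 0-based indices the
entries at positions `(n-1-j, j)` with `2j < n-1` equal `1`. -/
def zMat (n : ℕ) : Matrix (Fin n) (Fin n) ℝ :=
  Matrix.of fun i j => if (i : ℕ) = n - 1 - (j : ℕ) ∧ 2 * (j : ℕ) < n - 1 then 1 else 0

/-- Projection onto the lower triangular part (diagonal included), i.e. onto `𝔟_-`. -/
def lowTriProj (n : ℕ) (Y : Matrix (Fin n) (Fin n) ℝ) : Matrix (Fin n) (Fin n) ℝ :=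
  Matrix.of fun i j => if (j : ℕ) ≤ (i : ℕ) then Y i j else 0

-- Conjugating by `diagonal v` rescales the entry `(i, j)` by `v j / v i`.
theorem diagonal_inv_mul_mul_diagonal_apply_of_eq {ι K : Type*} [Fintype ι] [DecidableEq ι]
    [Field K] (v : ι → K) (M : Matrix ι ι K) {i j : ι} (hj : v j ≠ 0)
    (h : M i j = 0 ∨ v i = v j) :
    (diagonal (fun i => (v i)⁻¹) * M * diagonal v) i j = M i j := by
  rw [mul_diagonal, diagonal_mul]
  rcases h with h | h
  · simp [h]
  · rw [h, mul_comm, ← mul_assoc, mul_inv_cancel₀ hj, one_mul]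

section

variable {n : ℕ} {i j : Fin n}

theorem lowTriProj_apply_of_le (Y : Matrix (Fin n) (Fin n) ℝ) (h : (j : ℕ) ≤ i) :
    lowTriProj n Y i j = Y i j := if_pos h

theorem lowTriProj_apply_of_lt (Y : Matrix (Fin n) (Fin n) ℝ) (h : (i : ℕ) < j) :
    lowTriProj n Y i j = 0 := if_neg (by omega)

theorem epsMat_apply_of_le (h : (j : ℕ) ≤ i) : epsMat n i j = 0 := if_neg (by omega)

theorem zMat_apply_of_lt (h : (i : ℕ) < j) : zMat n i j = 0 := if_neg (by omega)

theorem val_eq_of_zMat_apply_ne_zero (h : zMat n i j ≠ 0) : (i : ℕ) = n - 1 - j := by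
  by_contra hne
  exact h (if_neg fun hz => hne hz.1)

end

theorem crossSection_isotropy (n : ℕ) (v k : Fin n → ℝ)
    (hv : ∀ i, 0 < v i)
    (hvsym : ∀ i : Fin n, v i = v ⟨n - 1 - (i : ℕ), by have := i.isLt; omega⟩) :
    epsMat n +
      lowTriProj n
        ((Matrix.diagonal fun i => (v i)⁻¹) *
          (epsMat n + Matrix.diagonal k + zMat n) * Matrix.diagonal v) =
    epsMat n + Matrix.diagonal k + zMat n := by
  ext i j
  rcases le_or_gt (j : ℕ) i with hle | hlt
  · -- on and below the diagonal, `f` is supported on the diagonal and on `Z`, where `v` is symmetric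
    have hfixed : (epsMat n + diagonal k + zMat n) i j = 0 ∨ v i = v j := by
      by_cases hij : i = j
      · exact .inr (congrArg v hij)
      by_cases hz : zMat n i j = 0
      · left
        simp [epsMat_apply_of_le hle, diagonal_apply_ne _ hij, hz]
      · right
        rw [hvsym j]
        exact congrArg v (Fin.ext (val_eq_of_zMat_apply_ne_zero hz))
    rw [Matrix.add_apply, lowTriProj_apply_of_le _ hle,
      diagonal_inv_mul_mul_diagonal_apply_of_eq v _ (hv j).ne' hfixed, epsMat_apply_of_le hle,
      zero_add]
  · have hij : i ≠ j := fun h => by simp [h] at hlt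
    simp [lowTriProj_apply_of_lt _ hlt, zMat_apply_of_lt hlt, diagonal_apply_ne _ hij]
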